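/- Let V ∈ ℝ^{3×3} be the matrix with V₁₁ = 1 and all other entries 0. Let U ∈ ℝ^{3×3} be symmetric with U₁₁ = 1, U₁ⱼ = Uⱼ₁ = 0 for j ∈ {2,3}, and suppose the symmetric 2×2 block W = (U_{ij})_{i,j∈{2,3}} has all eigenvalues in [−1, 1] (equivalently, both I₂ − W and I₂ + W are positive semidefinite). Then for every symmetric matrix B ∈ ℝ^{3×3} with rank B ≤ 1, one has ‖U − V‖_F ≤ ‖U − B‖_F. That is, such U lie in the Voronoi cell of V within the variety of symmetric 3×3 matrices of rank at most 1, for the Frobenius metric. -/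

import Mathlib

/-- The Frobenius norm of a real matrix: `‖A‖_F = sqrt (Σᵢⱼ Aᵢⱼ²)`. -/
noncomputable def frobNorm (A : Matrix (Fin 3) (Fin 3) ℝ) : ℝ :=
  Real.sqrt (∑ i, ∑ j, (A i j) ^ 2)

/-- A symmetric matrix of rank at most one is `t • y yᵀ`. -/
lemma symm_rank_le_one_decomp (B : Matrix (Fin 3) (Fin 3) ℝ) (hs : B.IsSymm)
    (hr : B.rank ≤ 1) : ∃ t : ℝ, ∃ y : Fin 3 → ℝ, ∀ i j, B i j = t * y i * y j := by
  have hrk : Module.rank ℝ (LinearMap.range B.mulVecLin) ≤ 1 := by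
    rw [← Module.finrank_eq_rank]
    exact_mod_cast hr
  obtain ⟨v₀, hle⟩ := (rank_submodule_le_one_iff' _).mp hrk
  have hcol : ∀ j : Fin 3, ∃ c : ℝ, ∀ i, B i j = c * v₀ i := by
    intro j
    have hmem : B.mulVec (Pi.single j 1) ∈ Submodule.span ℝ {v₀} :=
      hle ⟨Pi.single j 1, rfl⟩
    obtain ⟨c, hc⟩ := Submodule.mem_span_singleton.mp hmem
    refine ⟨c, fun i => ?_⟩
    have := congrFun hc i
    simpa [Matrix.mulVec_single] using this.symm
  choose c hc using hcol
  by_cases h0 : v₀ = 0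
  · exact ⟨0, fun _ => 0, fun i j => by simp [hc j i, h0]⟩
  · obtain ⟨i₀, hi₀⟩ : ∃ i, v₀ i ≠ 0 := by
      by_contra h; push_neg at h; exact h0 (funext h)
    refine ⟨c i₀ / v₀ i₀, v₀, fun i j => ?_⟩
    have hsymm : ∀ i j, B i j = B j i := fun i j => hs.apply j i
    have h1 : B i j = c j * v₀ i := hc j i
    have h2 : B i₀ j = c j * v₀ i₀ := hc j i₀
    have h3 : B j i₀ = c i₀ * v₀ j := hc i₀ j
    have h4 : c j * v₀ i₀ = c i₀ * v₀ j := by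
      rw [← h2, hsymm i₀ j, h3]
    have h5 : c j = c i₀ / v₀ i₀ * v₀ j := by
      field_simp
      linarith [h4]
    rw [h1, h5]; ring

/-- Let `V = diag(1,0,0)` and let `U` be symmetric with first row and
column equal to those of `V`, whose lower-right symmetric `2×2` block `W` has all
eigenvalues in `[−1,1]` (i.e. `I₂ − W ⪰ 0` and `I₂ + W ⪰ 0`).  Then `U` lies in the
Voronoi cell of `V` within the variety of symmetric `3×3` matrices of rank `≤ 1`,
for the Frobenius metric. -/
theorem symmetric_rank_one_voronoi
    (V : Matrix (Fin 3) (Fin 3) ℝ)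
    (hV : V = Matrix.of fun i j => if i = 0 ∧ j = 0 then (1 : ℝ) else 0)
    (U : Matrix (Fin 3) (Fin 3) ℝ) (hUsymm : U.IsSymm)
    (hU00 : U 0 0 = 1) (hU01 : U 0 1 = 0) (hU10 : U 1 0 = 0)
    (hU02 : U 0 2 = 0) (hU20 : U 2 0 = 0)
    (W : Matrix (Fin 2) (Fin 2) ℝ)
    (hW : W = !![U 1 1, U 1 2; U 2 1, U 2 2])
    (hW1 : ((1 : Matrix (Fin 2) (Fin 2) ℝ) - W).PosSemidef)
    (hW2 : ((1 : Matrix (Fin 2) (Fin 2) ℝ) + W).PosSemidef) :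
    ∀ B : Matrix (Fin 3) (Fin 3) ℝ, B.IsSymm → B.rank ≤ 1 →
      frobNorm (U - V) ≤ frobNorm (U - B) := by
  intro B hBs hBr
  obtain ⟨t, y, hB⟩ := symm_rank_le_one_decomp B hBs hBr
  have hU21 : U 2 1 = U 1 2 := hUsymm.apply 1 2
  unfold frobNorm
  apply Real.sqrt_le_sqrt
  -- quadratic form facts
  have hq1 := hW1.dotProduct_mulVec_nonneg ![y 1, y 2]
  have hq2 := hW2.dotProduct_mulVec_nonneg ![y 1, y 2]
  simp only [dotProduct, Matrix.mulVec, Matrix.sub_apply, Matrix.add_apply,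
    Matrix.one_apply, hW, Fin.sum_univ_two, Matrix.cons_val', Matrix.cons_val_zero,
    Matrix.cons_val_one, Matrix.head_cons, Matrix.head_fin_const, star_trivial,
    Pi.star_apply, Matrix.empty_val', Matrix.cons_val_fin_one] at hq1 hq2
  rw [hU21] at hq1 hq2
  norm_num [Matrix.cons_val_zero, Matrix.cons_val_one, Matrix.head_cons] at hq1 hq2
  simp only [Fin.sum_univ_three, Matrix.sub_apply, hV, Matrix.of_apply, hB,
    hU00, hU01, hU10, hU02, hU20, hU21]
  norm_num [Fin.ext_iff]
  rcases le_or_gt 0 t with ht | ht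
  · nlinarith [sq_nonneg (t * (y 0 ^ 2 + y 1 ^ 2 + y 2 ^ 2) - 1), mul_nonneg ht hq1,
      mul_nonneg ht (sq_nonneg (y 0))]
  · have ht' : 0 ≤ -t := by linarith
    nlinarith [sq_nonneg (t * (y 0 ^ 2 + y 1 ^ 2 + y 2 ^ 2) + 1), mul_nonneg ht' hq2,
      mul_nonneg ht' (sq_nonneg (y 0))]
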